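/- arXiv:2108.12457 — 3 statements merged into one kernel-verified Lean document; each statement's English description precedes it below -/
import Mathlib

section
/- Let λ be a nonempty Young diagram, N ≥ |λ|, 0 ≤ k < N, and let S be an N⟨k⟩-standard set-valued pre-tableau of shape λ. Then f^{λ,N,S} ≤ f^{λ∖S} · C(k, |λ∖S|) · sv((λ∖S)⁺)^{k−|λ∖S|}, where λ∖S = {(r,c) ∈ λ : S(r,c) = ∅}, (λ∖S)⁺ = (λ∖S) ∪ NW({(r,c) ∈ λ : S(r,c) ≠ ∅}), f^{λ∖S} is the number of standard Young tableaux of shape λ∖S (with f^∅ = 1), and C(a,b) denotes the binomial coefficient. -/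
open Finset

/-- A Young diagram: a finite set of cells `(r,c)` with `r,c ≥ 1`, closed under
moving weakly north and west (staying in the positive quadrant). -/
def IsYoung (μ : Finset (ℕ × ℕ)) : Prop :=
  ∀ p ∈ μ, 1 ≤ p.1 ∧ 1 ≤ p.2 ∧
    ∀ r' c' : ℕ, 1 ≤ r' → r' ≤ p.1 → 1 ≤ c' → c' ≤ p.2 → (r', c') ∈ μ

/-- The staircase `δ^k = {(r,c) : r,c ≥ 1, r + c ≤ k + 1}`. -/
def staircase (k : ℕ) : Finset (ℕ × ℕ) :=
  (Finset.Icc 1 k ×ˢ Finset.Icc 1 k).filter (fun p => p.1 + p.2 ≤ k + 1)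

/-- `sv μ` is the largest `k` with `staircase k ⊆ μ` (it is `0` for `μ = ∅`). -/
def sv (μ : Finset (ℕ × ℕ)) : ℕ :=
  Nat.findGreatest (fun k => staircase k ⊆ μ) μ.card

/-- The cells of `A` that are the unique element of `A` weakly northwest of themselves. -/
def NW (A : Finset (ℕ × ℕ)) : Finset (ℕ × ℕ) :=
  A.filter (fun p => ∀ q ∈ A, q.1 ≤ p.1 → q.2 ≤ p.2 → q = p)

/-- The hook of a cell `p` in `μ`. -/
def hook (μ : Finset (ℕ × ℕ)) (p : ℕ × ℕ) : Finset (ℕ × ℕ) :=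
  μ.filter (fun q => (q.1 = p.1 ∧ p.2 < q.2) ∨ (q.2 = p.2 ∧ p.1 < q.1))

/-- The maximum of a finite set of naturals (`0` for the empty set). -/
def maxv (s : Finset ℕ) : ℕ := s.sup id

/-- An `N⟨k⟩`-standard set-valued pre-tableau of shape `μ`. -/
structure IsPreSVT (μ : Finset (ℕ × ℕ)) (N k : ℕ) (S : ℕ × ℕ → Finset ℕ) : Prop where
  support : ∀ p, p ∉ μ → S p = ∅
  subset : ∀ p ∈ μ, S p ⊆ Finset.Icc (k + 1) N
  exactlyOnce : ∀ i ∈ Finset.Icc (k + 1) N, ∃! p, p ∈ μ ∧ i ∈ S p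
  down_ne : ∀ r c : ℕ, (r, c) ∈ μ → (r + 1, c) ∈ μ →
    (S (r, c)).Nonempty → (S (r + 1, c)).Nonempty
  right_ne : ∀ r c : ℕ, (r, c) ∈ μ → (r, c + 1) ∈ μ →
    (S (r, c)).Nonempty → (S (r, c + 1)).Nonempty
  down_lt : ∀ r c : ℕ, (r, c) ∈ μ → (r + 1, c) ∈ μ →
    ∀ a ∈ S (r, c), ∀ b ∈ S (r + 1, c), a < b
  right_lt : ∀ r c : ℕ, (r, c) ∈ μ → (r, c + 1) ∈ μ →
    ∀ a ∈ S (r, c), ∀ b ∈ S (r, c + 1), a < b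
  empties : (μ.filter (fun p => S p = ∅)).card ≤ k

/-- An `N`-standard set-valued tableau of shape `μ`: every cell gets a nonempty set,
each value `1,…,N` appears exactly once, rows and columns are strictly increasing. -/
def IsSVT (μ : Finset (ℕ × ℕ)) (N : ℕ) (T : ℕ × ℕ → Finset ℕ) : Prop :=
  IsPreSVT μ N 0 T

/-- The set of `N`-standard set-valued tableaux of shape `μ` containing `S`. -/
def SVTset (μ : Finset (ℕ × ℕ)) (N : ℕ) (S : ℕ × ℕ → Finset ℕ) :
    Set (ℕ × ℕ → Finset ℕ) :=
  {T | IsSVT μ N T ∧ ∀ p, S p ⊆ T p}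

/-- `f^{μ,N,S}`, the number of `N`-standard set-valued tableaux of shape `μ` containing `S`. -/
noncomputable def fSVT (μ : Finset (ℕ × ℕ)) (N : ℕ) (S : ℕ × ℕ → Finset ℕ) : ℕ :=
  (SVTset μ N S).ncard

/-- `f^{μ,N}`, the number of `N`-standard set-valued tableaux of shape `μ`. -/
noncomputable def fSVTall (μ : Finset (ℕ × ℕ)) (N : ℕ) : ℕ :=
  {T : ℕ × ℕ → Finset ℕ | IsSVT μ N T}.ncard

/-- A standard Young tableau of shape `μ`: a bijection from the cells of `μ`
to `{1,…,|μ|}` increasing along rows and columns (valued `0` off `μ`). -/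
structure IsSYT (μ : Finset (ℕ × ℕ)) (F : ℕ × ℕ → ℕ) : Prop where
  support : ∀ p, p ∉ μ → F p = 0
  mem_range : ∀ p ∈ μ, F p ∈ Finset.Icc 1 μ.card
  exactlyOnce : ∀ i ∈ Finset.Icc 1 μ.card, ∃! p, p ∈ μ ∧ F p = i
  down_lt : ∀ r c : ℕ, (r, c) ∈ μ → (r + 1, c) ∈ μ → F (r, c) < F (r + 1, c)
  right_lt : ∀ r c : ℕ, (r, c) ∈ μ → (r, c + 1) ∈ μ → F (r, c) < F (r, c + 1)

/-- `f^μ`, the number of standard Young tableaux of shape `μ`. -/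
noncomputable def fSYT (μ : Finset (ℕ × ℕ)) : ℕ :=
  {F : ℕ × ℕ → ℕ | IsSYT μ F}.ncard


namespace SVTproof

open Finset

variable {lam : Finset (ℕ × ℕ)} {S T : ℕ × ℕ → Finset ℕ} {N k : ℕ}

lemma le_maxv {s : Finset ℕ} {a : ℕ} (ha : a ∈ s) : a ≤ maxv s :=
  Finset.le_sup (f := id) ha

lemma maxv_mem {s : Finset ℕ} (hs : s.Nonempty) : maxv s ∈ s := by
  have : maxv s = s.max' hs := by
    apply le_antisymm
    · exact Finset.sup_le fun a ha => Finset.le_max' s a ha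
    · exact le_maxv (s.max'_mem hs)
  rw [this]; exact s.max'_mem hs

lemma young_mem {μ : Finset (ℕ × ℕ)} (hY : IsYoung μ) {q p : ℕ × ℕ} (hq : q ∈ μ)
    (h1 : 1 ≤ p.1) (h2 : 1 ≤ p.2) (h3 : p.1 ≤ q.1) (h4 : p.2 ≤ q.2) : p ∈ μ := by
  have := (hY q hq).2.2 p.1 p.2 h1 h3 h2 h4
  simpa using this

def Ecells (lam : Finset (ℕ × ℕ)) (S : ℕ × ℕ → Finset ℕ) : Finset (ℕ × ℕ) :=
  lam.filter (fun p => S p = ∅)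

def Acells (lam : Finset (ℕ × ℕ)) (S : ℕ × ℕ → Finset ℕ) : Finset (ℕ × ℕ) :=
  lam.filter (fun p => S p ≠ ∅)

def Fpl (lam : Finset (ℕ × ℕ)) (S : ℕ × ℕ → Finset ℕ) : Finset (ℕ × ℕ) :=
  Ecells lam S ∪ NW (Acells lam S)

lemma Ecells_subset : Ecells lam S ⊆ lam := filter_subset _ _

lemma mem_Ecells {p : ℕ × ℕ} : p ∈ Ecells lam S ↔ p ∈ lam ∧ S p = ∅ := mem_filter

lemma mem_Acells {p : ℕ × ℕ} : p ∈ Acells lam S ↔ p ∈ lam ∧ S p ≠ ∅ := mem_filter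

lemma Fpl_subset : Fpl lam S ⊆ lam := by
  intro p hp
  rcases Finset.mem_union.mp hp with h | h
  · exact Ecells_subset h
  · exact (mem_Acells.mp ((filter_subset _ _) h)).1

/-- propagation of nonemptiness to the southeast -/
lemma prop_ne (hY : IsYoung lam) (hS : IsPreSVT lam N k S) :
    ∀ n : ℕ, ∀ p q : ℕ × ℕ, p ∈ lam → q ∈ lam → p.1 ≤ q.1 → p.2 ≤ q.2 →
      q.1 + q.2 ≤ n → (S p).Nonempty → (S q).Nonempty := by
  intro n
  induction n with
  | zero =>
    intro p q hp hq h1 h2 hn hne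
    exact absurd hn (by have := (hY q hq).1; omega)
  | succ n ih =>
    rintro ⟨p1, p2⟩ ⟨q1, q2⟩ hp hq h1 h2 hn hne
    simp only at h1 h2 hn
    rcases eq_or_ne (p1, p2) ((q1, q2) : ℕ × ℕ) with heq | hpq
    · rwa [heq] at hne
    have hq1 : 1 ≤ q1 := (hY _ hq).1
    have hq2 : 1 ≤ q2 := (hY _ hq).2.1
    have hp1 : 1 ≤ p1 := (hY _ hp).1
    have hp2 : 1 ≤ p2 := (hY _ hp).2.1
    have hsplit : p1 < q1 ∨ (p1 = q1 ∧ p2 < q2) := by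
      rcases lt_or_eq_of_le h1 with h | h
      · exact Or.inl h
      · refine Or.inr ⟨h, lt_of_le_of_ne h2 (fun hc => hpq ?_)⟩
        simp [h, hc]
    rcases hsplit with h | ⟨h, h'⟩
    · have hmidmem : (q1 - 1, q2) ∈ lam :=
        young_mem hY hq (by simp; omega) (by simpa using hq2) (by simp) (by simp)
      have e1 : p1 ≤ q1 - 1 := by omega
      have e3 : q1 - 1 + q2 ≤ n := by omega
      have hmidne : (S (q1 - 1, q2)).Nonempty :=
        ih (p1, p2) (q1 - 1, q2) hp hmidmem e1 h2 e3 hne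
      have heq : ((q1 - 1) + 1 : ℕ) = q1 := by omega
      have := hS.down_ne (q1 - 1) q2 hmidmem (by rw [heq]; exact hq) hmidne
      rwa [heq] at this
    · have hmidmem : (q1, q2 - 1) ∈ lam :=
        young_mem hY hq (by simpa using hq1) (by simp; omega) (by simp) (by simp)
      have e2 : p2 ≤ q2 - 1 := by omega
      have e3 : q1 + (q2 - 1) ≤ n := by omega
      have hmidne : (S (q1, q2 - 1)).Nonempty :=
        ih (p1, p2) (q1, q2 - 1) hp hmidmem h1 e2 e3 hne
      have heq : ((q2 - 1) + 1 : ℕ) = q2 := by omega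
      have := hS.right_ne q1 (q2 - 1) hmidmem (by rw [heq]; exact hq) hmidne
      rwa [heq] at this

lemma prop_ne' (hY : IsYoung lam) (hS : IsPreSVT lam N k S) {p q : ℕ × ℕ}
    (hp : p ∈ lam) (hq : q ∈ lam) (h1 : p.1 ≤ q.1) (h2 : p.2 ≤ q.2)
    (hne : (S p).Nonempty) : (S q).Nonempty :=
  prop_ne hY hS (q.1 + q.2) p q hp hq h1 h2 le_rfl hne

lemma Ecells_dc (hY : IsYoung lam) (hS : IsPreSVT lam N k S) {p q : ℕ × ℕ}
    (hq : q ∈ Ecells lam S) (hp : p ∈ lam) (h1 : p.1 ≤ q.1) (h2 : p.2 ≤ q.2) :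
    p ∈ Ecells lam S := by
  rcases mem_Ecells.mp hq with ⟨hqlam, hqS⟩
  refine mem_Ecells.mpr ⟨hp, ?_⟩
  by_contra h
  exact absurd hqS (Finset.nonempty_iff_ne_empty.mp
    (prop_ne' hY hS hp hqlam h1 h2 (Finset.nonempty_iff_ne_empty.mpr h)))

lemma Fpl_young (hY : IsYoung lam) (hS : IsPreSVT lam N k S) : IsYoung (Fpl lam S) := by
  intro p hp
  have hplam : p ∈ lam := Fpl_subset hp
  refine ⟨(hY p hplam).1, (hY p hplam).2.1, ?_⟩
  intro r' c' h1 h2 h3 h4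
  rcases eq_or_ne (r', c') p with heq | hne
  · rwa [heq]
  have hrc : (r', c') ∈ lam := (hY p hplam).2.2 r' c' h1 h2 h3 h4
  rcases Finset.mem_union.mp hp with hE | hNW
  · exact Finset.mem_union_left _ (Ecells_dc hY hS hE hrc h2 h4)
  · rcases mem_filter.mp hNW with ⟨hA, hprop⟩
    by_cases hrcA : (r', c') ∈ Acells lam S
    · exact absurd (hprop _ hrcA h2 h4) hne
    · refine Finset.mem_union_left _ (mem_Ecells.mpr ⟨hrc, ?_⟩)
      by_contra h
      exact hrcA (mem_Acells.mpr ⟨hrc, h⟩)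

lemma svt_nonempty (hT : IsSVT lam N T) {p : ℕ × ℕ} (hp : p ∈ lam) : (T p).Nonempty := by
  have h0 : (lam.filter (fun p => T p = ∅)) = ∅ :=
    Finset.card_eq_zero.mp (Nat.le_zero.mp hT.empties)
  rw [Finset.nonempty_iff_ne_empty]
  intro h
  have : p ∈ lam.filter (fun p => T p = ∅) := Finset.mem_filter.mpr ⟨hp, h⟩
  rw [h0] at this
  exact absurd this (Finset.notMem_empty p)

lemma svt_mem_lam (hT : IsSVT lam N T) {i : ℕ} {p : ℕ × ℕ} (h : i ∈ T p) : p ∈ lam := by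
  by_contra hp
  rw [hT.support p hp] at h
  exact absurd h (Finset.notMem_empty i)

lemma svt_subset (hT : IsSVT lam N T) {p : ℕ × ℕ} (hp : p ∈ lam) :
    T p ⊆ Finset.Icc 1 N := hT.subset p hp

lemma svt_uniq (hT : IsSVT lam N T) {i : ℕ} {p q : ℕ × ℕ}
    (h1 : i ∈ T p) (h2 : i ∈ T q) : p = q := by
  have hp := svt_mem_lam hT h1
  have hq := svt_mem_lam hT h2
  have hi : i ∈ Finset.Icc 1 N := svt_subset hT hp h1
  obtain ⟨r, -, hr⟩ := hT.exactlyOnce i hi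
  rw [hr p ⟨hp, h1⟩, hr q ⟨hq, h2⟩]

/-- strict increase along the order in an SVT -/
lemma svt_chain (hY : IsYoung lam) (hT : IsSVT lam N T) :
    ∀ n : ℕ, ∀ p q : ℕ × ℕ, p ∈ lam → q ∈ lam → p.1 ≤ q.1 → p.2 ≤ q.2 → p ≠ q →
      q.1 + q.2 ≤ n → ∀ a ∈ T p, ∀ b ∈ T q, a < b := by
  intro n
  induction n with
  | zero =>
    intro p q hp hq h1 h2 hpq hn
    exact absurd hn (by have := (hY q hq).1; omega)
  | succ n ih =>
    rintro ⟨p1, p2⟩ ⟨q1, q2⟩ hp hq h1 h2 hpq hn a ha b hb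
    simp only at h1 h2 hn
    have hq1 : 1 ≤ q1 := (hY _ hq).1
    have hq2 : 1 ≤ q2 := (hY _ hq).2.1
    have hp1 : 1 ≤ p1 := (hY _ hp).1
    have hp2 : 1 ≤ p2 := (hY _ hp).2.1
    have hsplit : p1 < q1 ∨ (p1 = q1 ∧ p2 < q2) := by
      rcases lt_or_eq_of_le h1 with h | h
      · exact Or.inl h
      · refine Or.inr ⟨h, lt_of_le_of_ne h2 (fun hc => hpq ?_)⟩
        simp [h, hc]
    rcases hsplit with h | ⟨h, h'⟩
    · have hmidmem : (q1 - 1, q2) ∈ lam :=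
        young_mem hY hq (by simp; omega) (by simpa using hq2) (by simp) (by simp)
      have heq : ((q1 - 1) + 1 : ℕ) = q1 := by omega
      have hdl := hT.down_lt (q1 - 1) q2 hmidmem (by rw [heq]; exact hq)
      rw [heq] at hdl
      rcases eq_or_ne ((p1, p2) : ℕ × ℕ) (q1 - 1, q2) with hmid | hmid
      · exact hdl a (by rw [← hmid]; exact ha) b hb
      · obtain ⟨c, hc⟩ := svt_nonempty hT hmidmem
        have e1 : p1 ≤ q1 - 1 := by omega
        have e3 : q1 - 1 + q2 ≤ n := by omega
        exact lt_trans (ih (p1, p2) (q1 - 1, q2) hp hmidmem e1 h2 hmid e3 a ha c hc)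
          (hdl c hc b hb)
    · have hmidmem : (q1, q2 - 1) ∈ lam :=
        young_mem hY hq (by simpa using hq1) (by simp; omega) (by simp) (by simp)
      have heq : ((q2 - 1) + 1 : ℕ) = q2 := by omega
      have hdl := hT.right_lt q1 (q2 - 1) hmidmem (by rw [heq]; exact hq)
      rw [heq] at hdl
      rcases eq_or_ne ((p1, p2) : ℕ × ℕ) (q1, q2 - 1) with hmid | hmid
      · exact hdl a (by rw [← hmid]; exact ha) b hb
      · obtain ⟨c, hc⟩ := svt_nonempty hT hmidmem
        have e2 : p2 ≤ q2 - 1 := by omega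
        have e3 : q1 + (q2 - 1) ≤ n := by omega
        exact lt_trans (ih (p1, p2) (q1, q2 - 1) hp hmidmem h1 e2 hmid e3 a ha c hc)
          (hdl c hc b hb)

lemma svt_chain' (hY : IsYoung lam) (hT : IsSVT lam N T) {p q : ℕ × ℕ}
    (hp : p ∈ lam) (hq : q ∈ lam) (h1 : p.1 ≤ q.1) (h2 : p.2 ≤ q.2) (hpq : p ≠ q)
    {a b : ℕ} (ha : a ∈ T p) (hb : b ∈ T q) : a < b :=
  svt_chain hY hT (q.1 + q.2) p q hp hq h1 h2 hpq le_rfl a ha b hb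

def Mset (lam : Finset (ℕ × ℕ)) (S T : ℕ × ℕ → Finset ℕ) : Finset ℕ :=
  (Ecells lam S).image (fun p => maxv (T p))

def rnk (M : Finset ℕ) (j : ℕ) : ℕ := (M.filter (fun x => x ≤ j)).card

noncomputable def Fsyt (lam : Finset (ℕ × ℕ)) (S T : ℕ × ℕ → Finset ℕ) : ℕ × ℕ → ℕ :=
  fun p => if p ∈ Ecells lam S then rnk (Mset lam S T) (maxv (T p)) else 0

lemma val_le_k (hS : IsPreSVT lam N k S) (hT : IsSVT lam N T) (hTS : ∀ p, S p ⊆ T p)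
    {p : ℕ × ℕ} {i : ℕ} (hp : p ∈ Ecells lam S) (hi : i ∈ T p) : i ≤ k := by
  by_contra h
  push_neg at h
  have hiN : i ∈ Finset.Icc 1 N := svt_subset hT (Ecells_subset hp) hi
  rw [Finset.mem_Icc] at hiN
  obtain ⟨q0, ⟨hq0lam, hq0⟩, -⟩ := hS.exactlyOnce i (Finset.mem_Icc.mpr ⟨by omega, hiN.2⟩)
  have : p = q0 := svt_uniq hT hi (hTS q0 hq0)
  rw [this] at hp
  rw [(mem_Ecells.mp hp).2] at hq0
  exact absurd hq0 (Finset.notMem_empty i)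

lemma Mf_injOn (hT : IsSVT lam N T) {p q : ℕ × ℕ} (hp : p ∈ Ecells lam S)
    (hq : q ∈ Ecells lam S) (h : maxv (T p) = maxv (T q)) : p = q := by
  have h1 : maxv (T p) ∈ T p := maxv_mem (svt_nonempty hT (Ecells_subset hp))
  have h2 : maxv (T q) ∈ T q := maxv_mem (svt_nonempty hT (Ecells_subset hq))
  exact svt_uniq hT h1 (h ▸ h2)

lemma Mset_card (hT : IsSVT lam N T) : (Mset lam S T).card = (Ecells lam S).card :=
  Finset.card_image_of_injOn (fun p hp q hq h => Mf_injOn hT hp hq h)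

lemma Mset_subset (hS : IsPreSVT lam N k S) (hT : IsSVT lam N T) (hTS : ∀ p, S p ⊆ T p) :
    Mset lam S T ⊆ Finset.Icc 1 k := by
  intro a ha
  obtain ⟨p, hp, rfl⟩ := Finset.mem_image.mp ha
  have hmem : maxv (T p) ∈ T p := maxv_mem (svt_nonempty hT (Ecells_subset hp))
  have h1 := (Finset.mem_Icc.mp (svt_subset hT (Ecells_subset hp) hmem)).1
  exact Finset.mem_Icc.mpr ⟨h1, val_le_k hS hT hTS hp hmem⟩

lemma rnk_lt {M : Finset ℕ} {a b : ℕ} (hb : b ∈ M) (hab : a < b) : rnk M a < rnk M b := by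
  apply Finset.card_lt_card
  constructor
  · intro x hx
    rw [Finset.mem_filter] at hx ⊢
    exact ⟨hx.1, le_trans hx.2 (le_of_lt hab)⟩
  · intro hsub
    have : b ∈ M.filter (fun x => x ≤ a) := hsub (Finset.mem_filter.mpr ⟨hb, le_rfl⟩)
    exact absurd (Finset.mem_filter.mp this).2 (by omega)

lemma rnk_injOn {M : Finset ℕ} {a b : ℕ} (ha : a ∈ M) (hb : b ∈ M)
    (h : rnk M a = rnk M b) : a = b := by
  rcases lt_trichotomy a b with hlt | heq | hgt
  · exact absurd h (Nat.ne_of_lt (rnk_lt hb hlt))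
  · exact heq
  · exact absurd h.symm (Nat.ne_of_lt (rnk_lt ha hgt))

lemma rnk_pos {M : Finset ℕ} {a : ℕ} (ha : a ∈ M) : 1 ≤ rnk M a :=
  Finset.card_pos.mpr ⟨a, Finset.mem_filter.mpr ⟨ha, le_rfl⟩⟩

lemma rnk_le_card {M : Finset ℕ} {a : ℕ} : rnk M a ≤ M.card :=
  Finset.card_le_card (Finset.filter_subset _ _)

lemma Fsyt_injOn (hT : IsSVT lam N T) {p q : ℕ × ℕ} (hp : p ∈ Ecells lam S)
    (hq : q ∈ Ecells lam S) (h : Fsyt lam S T p = Fsyt lam S T q) : p = q := by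
  simp only [Fsyt] at h
  rw [if_pos hp, if_pos hq] at h
  exact Mf_injOn hT hp hq
    (rnk_injOn (Finset.mem_image_of_mem (fun p => maxv (T p)) hp) (Finset.mem_image_of_mem (fun p => maxv (T p)) hq) h)

lemma Fsyt_mem_range (hT : IsSVT lam N T) {p : ℕ × ℕ} (hp : p ∈ Ecells lam S) :
    Fsyt lam S T p ∈ Finset.Icc 1 (Ecells lam S).card := by
  simp only [Fsyt]
  rw [if_pos hp]
  refine Finset.mem_Icc.mpr ⟨rnk_pos (Finset.mem_image_of_mem (fun p => maxv (T p)) hp), ?_⟩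
  rw [← Mset_card (S := S) hT]
  exact rnk_le_card

lemma Fsyt_isSYT (hT : IsSVT lam N T) : IsSYT (Ecells lam S) (Fsyt lam S T) := by
  constructor
  · intro p hp
    exact if_neg hp
  · intro p hp
    exact Fsyt_mem_range hT hp
  · intro i hi
    have hsurj := Finset.surj_on_of_inj_on_of_card_le
      (s := Ecells lam S) (t := Finset.Icc 1 (Ecells lam S).card)
      (fun p _ => Fsyt lam S T p)
      (fun p hp => Fsyt_mem_range hT hp)
      (fun p q hp hq h => Fsyt_injOn hT hp hq h)
      (by rw [Nat.card_Icc]; omega)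
    obtain ⟨p, hp, hpi⟩ := hsurj i hi
    exact ⟨p, ⟨hp, hpi.symm⟩, fun q ⟨hq1, hq2⟩ => Fsyt_injOn hT hq1 hp (by rw [hq2, hpi])⟩
  · intro r c h1 h2
    simp only [Fsyt]
    rw [if_pos h1, if_pos h2]
    refine rnk_lt (Finset.mem_image_of_mem (fun p => maxv (T p)) h2) ?_
    exact hT.down_lt r c (Ecells_subset h1) (Ecells_subset h2)
      _ (maxv_mem (svt_nonempty hT (Ecells_subset h1)))
      _ (maxv_mem (svt_nonempty hT (Ecells_subset h2)))
  · intro r c h1 h2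
    simp only [Fsyt]
    rw [if_pos h1, if_pos h2]
    refine rnk_lt (Finset.mem_image_of_mem (fun p => maxv (T p)) h2) ?_
    exact hT.right_lt r c (Ecells_subset h1) (Ecells_subset h2)
      _ (maxv_mem (svt_nonempty hT (Ecells_subset h1)))
      _ (maxv_mem (svt_nonempty hT (Ecells_subset h2)))

open Classical in
noncomputable def cellOf (T : ℕ × ℕ → Finset ℕ) (i : ℕ) : ℕ × ℕ :=
  if h : ∃ p, i ∈ T p then h.choose else (0, 0)

lemma cellOf_eq (hT : IsSVT lam N T) {i : ℕ} {p : ℕ × ℕ} (h : i ∈ T p) :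
    cellOf T i = p := by
  rw [cellOf]
  rw [dif_pos (⟨p, h⟩ : ∃ p, i ∈ T p)]
  exact svt_uniq hT (Exists.choose_spec (⟨p, h⟩ : ∃ p, i ∈ T p)) h

open Classical in
noncomputable def Dset (lam : Finset (ℕ × ℕ)) (S : ℕ × ℕ → Finset ℕ)
    (Mg : ℕ × ℕ → ℕ) (i : ℕ) : Finset (ℕ × ℕ) :=
  (Fpl lam S).filter (fun q =>
    (q ∈ Ecells lam S → i < Mg q) ∧
    ((q.1 - 1, q.2) ∈ Ecells lam S → Mg (q.1 - 1, q.2) < i) ∧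
    ((q.1, q.2 - 1) ∈ Ecells lam S → Mg (q.1, q.2 - 1) < i))

lemma Dset_congr {Mg1 Mg2 : ℕ × ℕ → ℕ} {i : ℕ}
    (h : ∀ p ∈ Ecells lam S, Mg1 p = Mg2 p) :
    Dset lam S Mg1 i = Dset lam S Mg2 i := by
  unfold Dset
  apply Finset.filter_congr
  intro q _
  constructor
  · rintro ⟨a, b, c⟩
    exact ⟨fun hq => (h q hq) ▸ a hq, fun hq => (h _ hq) ▸ b hq, fun hq => (h _ hq) ▸ c hq⟩
  · rintro ⟨a, b, c⟩
    exact ⟨fun hq => (h q hq) ▸ a hq, fun hq => (h _ hq) ▸ b hq, fun hq => (h _ hq) ▸ c hq⟩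

lemma Dset_subset {Mg : ℕ × ℕ → ℕ} {i : ℕ} : Dset lam S Mg i ⊆ Fpl lam S :=
  Finset.filter_subset _ _

/-- the cell containing a small value `i` (not a cell maximum) lies in `Dset`. -/
lemma cell_mem_Dset (hY : IsYoung lam) (hS : IsPreSVT lam N k S) (hT : IsSVT lam N T)
    (hTS : ∀ p, S p ⊆ T p) {i : ℕ} {q : ℕ × ℕ}
    (hi1 : 1 ≤ i) (hik : i ≤ k) (hiM : i ∉ Mset lam S T) (hq : i ∈ T q) :
    q ∈ Dset lam S (fun p => maxv (T p)) i := by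
  have hqlam : q ∈ lam := svt_mem_lam hT hq
  have hq1 : 1 ≤ q.1 := (hY q hqlam).1
  have hq2 : 1 ≤ q.2 := (hY q hqlam).2.1
  -- q ∈ Fpl
  have hqF : q ∈ Fpl lam S := by
    by_cases hqE : q ∈ Ecells lam S
    · exact Finset.mem_union_left _ hqE
    · have hqA : q ∈ Acells lam S := by
        refine mem_Acells.mpr ⟨hqlam, fun hc => hqE (mem_Ecells.mpr ⟨hqlam, hc⟩)⟩
      refine Finset.mem_union_right _ (Finset.mem_filter.mpr ⟨hqA, ?_⟩)
      intro p hpA hp1 hp2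
      by_contra hne
      rcases mem_Acells.mp hpA with ⟨hplam, hpS⟩
      have hpne : (S p).Nonempty := Finset.nonempty_iff_ne_empty.mpr hpS
      have hp1' : 1 ≤ p.1 := (hY p hplam).1
      have hp2' : 1 ≤ p.2 := (hY p hplam).2.1
      have hsplit : p.1 < q.1 ∨ p.2 < q.2 := by
        rcases lt_or_eq_of_le hp1 with h | h
        · exact Or.inl h
        · refine Or.inr (lt_of_le_of_ne hp2 (fun hc => hne ?_))
          exact Prod.ext h hc
      rcases hsplit with h | h
      · have hmid : (q.1 - 1, q.2) ∈ lam := by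
          refine young_mem hY hqlam ?_ ?_ ?_ ?_ <;> simp
          · omega
          · exact hq2
        have hmidne : (S (q.1 - 1, q.2)).Nonempty :=
          prop_ne' hY hS hplam hmid (by simp; omega) (by simpa using hp2) hpne
        have ha : maxv (S (q.1 - 1, q.2)) ∈ T (q.1 - 1, q.2) :=
          hTS _ (maxv_mem hmidne)
        have hak : k + 1 ≤ maxv (S (q.1 - 1, q.2)) := by
          have := hS.subset _ hmid (maxv_mem hmidne)
          exact (Finset.mem_Icc.mp this).1
        have heq : ((q.1 - 1) + 1 : ℕ) = q.1 := by omega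
        have hdl := hT.down_lt (q.1 - 1) q.2 hmid
          (by rw [heq, Prod.mk.eta]; exact hqlam) _ ha i
          (by rw [heq, Prod.mk.eta]; exact hq)
        omega
      · have hmid : (q.1, q.2 - 1) ∈ lam := by
          refine young_mem hY hqlam ?_ ?_ ?_ ?_ <;> simp
          · exact hq1
          · omega
        have hmidne : (S (q.1, q.2 - 1)).Nonempty :=
          prop_ne' hY hS hplam hmid (by simpa using hp1) (by simp; omega) hpne
        have ha : maxv (S (q.1, q.2 - 1)) ∈ T (q.1, q.2 - 1) :=
          hTS _ (maxv_mem hmidne)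
        have hak : k + 1 ≤ maxv (S (q.1, q.2 - 1)) := by
          have := hS.subset _ hmid (maxv_mem hmidne)
          exact (Finset.mem_Icc.mp this).1
        have heq : ((q.2 - 1) + 1 : ℕ) = q.2 := by omega
        have hdl := hT.right_lt q.1 (q.2 - 1) hmid
          (by rw [heq, Prod.mk.eta]; exact hqlam) _ ha i
          (by rw [heq, Prod.mk.eta]; exact hq)
        omega
  rw [Dset, Finset.mem_filter]
  refine ⟨hqF, ?_, ?_, ?_⟩
  · intro hqE
    have hle : i ≤ maxv (T q) := le_maxv hq
    have hne : i ≠ maxv (T q) := by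
      intro hc
      exact hiM (hc ▸ Finset.mem_image_of_mem (fun p => maxv (T p)) hqE)
    omega
  · intro hpE
    have hplam := Ecells_subset hpE
    have heq : ((q.1 - 1) + 1 : ℕ) = q.1 := by omega
    exact hT.down_lt (q.1 - 1) q.2 hplam (by rw [heq, Prod.mk.eta]; exact hqlam)
      _ (maxv_mem (svt_nonempty hT hplam)) i (by rw [heq, Prod.mk.eta]; exact hq)
  · intro hpE
    have hplam := Ecells_subset hpE
    have heq : ((q.2 - 1) + 1 : ℕ) = q.2 := by omega
    exact hT.right_lt q.1 (q.2 - 1) hplam (by rw [heq, Prod.mk.eta]; exact hqlam)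
      _ (maxv_mem (svt_nonempty hT hplam)) i (by rw [heq, Prod.mk.eta]; exact hq)

lemma Dset_antichain (hY : IsYoung lam) (hS : IsPreSVT lam N k S) (hT : IsSVT lam N T)
    {i : ℕ} {q1 q2 : ℕ × ℕ} (h1 : q1 ∈ Dset lam S (fun p => maxv (T p)) i)
    (h2 : q2 ∈ Dset lam S (fun p => maxv (T p)) i)
    (hr : q1.1 ≤ q2.1) (hc : q1.2 ≤ q2.2) : q1 = q2 := by
  by_contra hne
  rw [Dset, Finset.mem_filter] at h1 h2
  obtain ⟨h1F, h1a, h1b, h1c⟩ := h1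
  obtain ⟨h2F, h2a, h2b, h2c⟩ := h2
  have h1lam : q1 ∈ lam := Fpl_subset h1F
  have h2lam : q2 ∈ lam := Fpl_subset h2F
  have hq11 : 1 ≤ q1.1 := (hY _ h1lam).1
  have hq12 : 1 ≤ q1.2 := (hY _ h1lam).2.1
  have key : ∀ pr : ℕ × ℕ, pr ∈ lam → pr.1 ≤ q2.1 → pr.2 ≤ q2.2 → pr ≠ q2 →
      pr ∈ Acells lam S → False := by
    intro pr hprlam hle1 hle2 hprne hprA
    rcases Finset.mem_union.mp h2F with hE | hNW
    · exact absurd (mem_Ecells.mp (Ecells_dc hY hS hE hprlam hle1 hle2)).2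
        (mem_Acells.mp hprA).2
    · rcases Finset.mem_filter.mp hNW with ⟨-, hprop⟩
      exact hprne (hprop pr hprA hle1 hle2)
  have hsplit : q1.1 < q2.1 ∨ q1.2 < q2.2 := by
    rcases lt_or_eq_of_le hr with h | h
    · exact Or.inl h
    · exact Or.inr (lt_of_le_of_ne hc (fun hcc => hne (Prod.ext h hcc)))
  rcases hsplit with h | h
  · set pr : ℕ × ℕ := (q2.1 - 1, q2.2) with hpr
    have hprlam : pr ∈ lam :=
      young_mem hY h2lam (by simp [hpr]; omega) (by simp [hpr]; omega) (by simp [hpr])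
        (by simp [hpr])
    have hprne : pr ≠ q2 := by
      intro hc'
      have := congrArg Prod.fst hc'
      simp [hpr] at this
      omega
    have hprE : pr ∈ Ecells lam S := by
      by_cases hA : pr ∈ Acells lam S
      · exact absurd (key pr hprlam (by simp [hpr]) (by simp [hpr]) hprne hA) not_false
      · refine mem_Ecells.mpr ⟨hprlam, ?_⟩
        by_contra hcc
        exact hA (mem_Acells.mpr ⟨hprlam, hcc⟩)
    have hMpr : maxv (T pr) < i := h2b hprE
    by_cases h1E : q1 ∈ Ecells lam S
    · have hMq1 : i < maxv (T q1) := h1a h1E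
      rcases eq_or_ne q1 pr with rfl | hq1pr
      · omega
      · have : maxv (T q1) < maxv (T pr) :=
          svt_chain' hY hT h1lam hprlam (by simp [hpr]; omega) (by simp [hpr]; omega) hq1pr
            (maxv_mem (svt_nonempty hT h1lam)) (maxv_mem (svt_nonempty hT hprlam))
        omega
    · have h1A : q1 ∈ Acells lam S := by
        rcases Finset.mem_union.mp h1F with hE | hNW
        · exact absurd hE h1E
        · exact Finset.mem_filter.mp hNW |>.1
      have : (S pr).Nonempty :=
        prop_ne' hY hS h1lam hprlam (by simp [hpr]; omega) (by simp [hpr]; omega)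
          (Finset.nonempty_iff_ne_empty.mpr (mem_Acells.mp h1A).2)
      exact absurd (mem_Ecells.mp hprE).2 (Finset.nonempty_iff_ne_empty.mp this)
  · set pr : ℕ × ℕ := (q2.1, q2.2 - 1) with hpr
    have hprlam : pr ∈ lam :=
      young_mem hY h2lam (by simp [hpr]; omega) (by simp [hpr]; omega) (by simp [hpr])
        (by simp [hpr])
    have hprne : pr ≠ q2 := by
      intro hc'
      have := congrArg Prod.snd hc'
      simp [hpr] at this
      omega
    have hprE : pr ∈ Ecells lam S := by
      by_cases hA : pr ∈ Acells lam S
      · exact absurd (key pr hprlam (by simp [hpr]) (by simp [hpr]) hprne hA) not_false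
      · refine mem_Ecells.mpr ⟨hprlam, ?_⟩
        by_contra hcc
        exact hA (mem_Acells.mpr ⟨hprlam, hcc⟩)
    have hMpr : maxv (T pr) < i := h2c hprE
    by_cases h1E : q1 ∈ Ecells lam S
    · have hMq1 : i < maxv (T q1) := h1a h1E
      rcases eq_or_ne q1 pr with rfl | hq1pr
      · omega
      · have : maxv (T q1) < maxv (T pr) :=
          svt_chain' hY hT h1lam hprlam (by simp [hpr]; omega) (by simp [hpr]; omega) hq1pr
            (maxv_mem (svt_nonempty hT h1lam)) (maxv_mem (svt_nonempty hT hprlam))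
        omega
    · have h1A : q1 ∈ Acells lam S := by
        rcases Finset.mem_union.mp h1F with hE | hNW
        · exact absurd hE h1E
        · exact Finset.mem_filter.mp hNW |>.1
      have : (S pr).Nonempty :=
        prop_ne' hY hS h1lam hprlam (by simp [hpr]; omega) (by simp [hpr]; omega)
          (Finset.nonempty_iff_ne_empty.mpr (mem_Acells.mp h1A).2)
      exact absurd (mem_Ecells.mp hprE).2 (Finset.nonempty_iff_ne_empty.mp this)

section Antichain

variable {μ D : Finset (ℕ × ℕ)}

/-- rows of an antichain are distinct -/
lemma anti_rows_inj (anti : ∀ p ∈ D, ∀ q ∈ D, p.1 ≤ q.1 → p.2 ≤ q.2 → p = q)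
    {p q : ℕ × ℕ} (hp : p ∈ D) (hq : q ∈ D) (h : p.1 = q.1) : p = q := by
  rcases le_total p.2 q.2 with h2 | h2
  · exact anti p hp q hq (le_of_eq h) h2
  · exact (anti q hq p hp (ge_of_eq h) h2).symm

lemma anti_idx_mono (anti : ∀ p ∈ D, ∀ q ∈ D, p.1 ≤ q.1 → p.2 ≤ q.2 → p = q)
    {p q : ℕ × ℕ} (hp : p ∈ D) (hq : q ∈ D) (h : p.1 < q.1) :
    (D.filter fun r => r.1 < p.1).card < (D.filter fun r => r.1 < q.1).card := by
  apply Finset.card_lt_card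
  constructor
  · intro r hr
    rw [Finset.mem_filter] at hr ⊢
    exact ⟨hr.1, by omega⟩
  · intro hsub
    have hpmem : p ∈ D.filter fun r => r.1 < q.1 := Finset.mem_filter.mpr ⟨hp, h⟩
    have := Finset.mem_filter.mp (hsub hpmem)
    omega

lemma anti_idx_inj (anti : ∀ p ∈ D, ∀ q ∈ D, p.1 ≤ q.1 → p.2 ≤ q.2 → p = q)
    {p q : ℕ × ℕ} (hp : p ∈ D) (hq : q ∈ D)
    (h : (D.filter fun r => r.1 < p.1).card = (D.filter fun r => r.1 < q.1).card) :
    p = q := by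
  rcases lt_trichotomy p.1 q.1 with hlt | heq | hgt
  · exact absurd h (Nat.ne_of_lt (anti_idx_mono anti hp hq hlt))
  · exact anti_rows_inj anti hp hq heq
  · exact absurd h.symm (Nat.ne_of_lt (anti_idx_mono anti hq hp hgt))

lemma anti_idx_lt_card {q : ℕ × ℕ} (hq : q ∈ D) :
    (D.filter fun r => r.1 < q.1).card < D.card := by
  have hsub : (D.filter fun r => r.1 < q.1) ⊆ D.erase q := by
    intro r hr
    rw [Finset.mem_filter] at hr
    exact Finset.mem_erase.mpr ⟨fun hc => by rw [hc] at hr; omega, hr.1⟩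
  calc (D.filter fun r => r.1 < q.1).card ≤ (D.erase q).card := Finset.card_le_card hsub
    _ < D.card := by
        rw [Finset.card_erase_of_mem hq]
        have : 1 ≤ D.card := Finset.card_pos.mpr ⟨q, hq⟩
        omega

lemma anti_idx_row (hYμ : IsYoung μ) (hD : D ⊆ μ)
    (anti : ∀ p ∈ D, ∀ q ∈ D, p.1 ≤ q.1 → p.2 ≤ q.2 → p = q)
    {q : ℕ × ℕ} (hq : q ∈ D) :
    (D.filter fun r => r.1 < q.1).card + 1 ≤ q.1 := by
  have himg : ((D.filter fun r => r.1 < q.1).image Prod.fst) ⊆ Finset.Icc 1 (q.1 - 1) := by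
    intro x hx
    obtain ⟨r, hr, rfl⟩ := Finset.mem_image.mp hx
    rw [Finset.mem_filter] at hr
    have h1 := (hYμ r (hD hr.1)).1
    exact Finset.mem_Icc.mpr ⟨h1, by omega⟩
  have hinj : ((D.filter fun r => r.1 < q.1).image Prod.fst).card
      = (D.filter fun r => r.1 < q.1).card := by
    apply Finset.card_image_of_injOn
    intro a ha b hb hab
    exact anti_rows_inj anti (Finset.mem_filter.mp ha).1 (Finset.mem_filter.mp hb).1 hab
  have hq1 : 1 ≤ q.1 := (hYμ q (hD hq)).1
  have := Finset.card_le_card himg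
  rw [hinj, Nat.card_Icc] at this
  omega

lemma anti_idx_col (hYμ : IsYoung μ) (hD : D ⊆ μ)
    (anti : ∀ p ∈ D, ∀ q ∈ D, p.1 ≤ q.1 → p.2 ≤ q.2 → p = q)
    {q : ℕ × ℕ} (hq : q ∈ D) :
    D.card ≤ (D.filter fun r => r.1 < q.1).card + q.2 := by
  have hins : (D.filter fun r => ¬ r.1 < q.1) = insert q (D.filter fun r => q.1 < r.1) := by
    ext r
    rw [Finset.mem_insert, Finset.mem_filter, Finset.mem_filter]
    constructor
    · rintro ⟨hrD, hr⟩
      rcases lt_or_eq_of_le (not_lt.mp hr) with h | h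
      · exact Or.inr ⟨hrD, h⟩
      · exact Or.inl (anti_rows_inj anti hrD hq h.symm)
    · rintro (rfl | ⟨hrD, hr⟩)
      · exact ⟨hq, by omega⟩
      · exact ⟨hrD, by omega⟩
  have hqnot : q ∉ (D.filter fun r => q.1 < r.1) := by
    intro hc
    have := (Finset.mem_filter.mp hc).2
    omega
  have hcard : (D.filter fun r => r.1 < q.1).card + (D.filter fun r => ¬ r.1 < q.1).card
      = D.card := Finset.card_filter_add_card_filter_not (fun r : ℕ × ℕ => r.1 < q.1)
  rw [hins, Finset.card_insert_of_notMem hqnot] at hcard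
  -- bound the strictly-greater part by q.2 - 1
  have himg : ((D.filter fun r => q.1 < r.1).image Prod.snd) ⊆ Finset.Icc 1 (q.2 - 1) := by
    intro x hx
    obtain ⟨r, hr, rfl⟩ := Finset.mem_image.mp hx
    rw [Finset.mem_filter] at hr
    have h1 := (hYμ r (hD hr.1)).2.1
    have hlt : r.2 < q.2 := by
      by_contra hcc
      push_neg at hcc
      have := anti q hq r hr.1 (by omega) hcc
      rw [this] at hr
      omega
    exact Finset.mem_Icc.mpr ⟨h1, by omega⟩
  have hinj : ((D.filter fun r => q.1 < r.1).image Prod.snd).card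
      = (D.filter fun r => q.1 < r.1).card := by
    apply Finset.card_image_of_injOn
    intro a ha b hb hab
    rcases Finset.mem_filter.mp ha with ⟨haD, -⟩
    rcases Finset.mem_filter.mp hb with ⟨hbD, -⟩
    rcases le_total a.1 b.1 with h | h
    · exact anti a haD b hbD h (le_of_eq hab)
    · exact (anti b hbD a haD h (ge_of_eq hab)).symm
  have hq2 : 1 ≤ q.2 := (hYμ q (hD hq)).2.1
  have hle := Finset.card_le_card himg
  rw [hinj, Nat.card_Icc] at hle
  omega

lemma anti_card_le_sv (hYμ : IsYoung μ) (hD : D ⊆ μ)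
    (anti : ∀ p ∈ D, ∀ q ∈ D, p.1 ≤ q.1 → p.2 ≤ q.2 → p = q) :
    D.card ≤ sv μ := by
  classical
  set t := D.card with ht
  have hsurj := Finset.surj_on_of_inj_on_of_card_le
    (s := D) (t := Finset.range t)
    (fun q _ => (D.filter fun r => r.1 < q.1).card)
    (fun q hq => Finset.mem_range.mpr (anti_idx_lt_card hq))
    (fun p q hp hq h => anti_idx_inj anti hp hq h)
    (by rw [Finset.card_range])
  have hst : staircase t ⊆ μ := by
    rintro ⟨a, b⟩ hab
    rw [staircase, Finset.mem_filter, Finset.mem_product, Finset.mem_Icc, Finset.mem_Icc] at hab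
    obtain ⟨⟨⟨ha1, ha2⟩, ⟨hb1, hb2⟩⟩, hsum⟩ := hab
    simp only at ha1 ha2 hb1 hb2 hsum
    obtain ⟨q, hq, hidx⟩ := hsurj (a - 1) (Finset.mem_range.mpr (by omega))
    have hrow := anti_idx_row hYμ hD anti hq
    have hcol := anti_idx_col hYμ hD anti hq
    rw [← hidx] at hrow hcol
    exact young_mem hYμ (hD hq) (by simpa using ha1) (by simpa using hb1)
      (by simp; omega) (by simp; omega)
  rw [sv]
  exact Nat.le_findGreatest (Finset.card_le_card hD) hst

end Antichain

noncomputable def hf (lam : Finset (ℕ × ℕ)) (S : ℕ × ℕ → Finset ℕ) (k : ℕ)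
    (T : ℕ × ℕ → Finset ℕ) : ℕ → ℕ := fun i =>
  if i ∈ Finset.Icc 1 k ∧ i ∉ Mset lam S T then
    ((Dset lam S (fun p => maxv (T p)) i).filter
      (fun r => r.1 < (cellOf T i).1)).card + 1
  else 0

lemma hf_le (hY : IsYoung lam) (hS : IsPreSVT lam N k S) (hT : IsSVT lam N T)
    (hTS : ∀ p, S p ⊆ T p) (hkN : k ≤ N) (i : ℕ) :
    hf lam S k T i ≤ sv (Fpl lam S) := by
  rw [hf]
  split
  · rename_i hcond
    obtain ⟨hik, hiM⟩ := hcond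
    rw [Finset.mem_Icc] at hik
    obtain ⟨q, ⟨hqlam, hq⟩, -⟩ := hT.exactlyOnce i (Finset.mem_Icc.mpr ⟨hik.1, le_trans hik.2 hkN⟩)
    have hcell : cellOf T i = q := cellOf_eq hT hq
    have hqD : q ∈ Dset lam S (fun p => maxv (T p)) i :=
      cell_mem_Dset hY hS hT hTS hik.1 hik.2 hiM hq
    rw [hcell]
    have h1 : ((Dset lam S (fun p => maxv (T p)) i).filter (fun r => r.1 < q.1)).card
        < (Dset lam S (fun p => maxv (T p)) i).card := anti_idx_lt_card hqD
    have h2 : (Dset lam S (fun p => maxv (T p)) i).card ≤ sv (Fpl lam S) :=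
      anti_card_le_sv (Fpl_young hY hS) Dset_subset
        (fun p hp q' hq' hr hc => Dset_antichain hY hS hT hp hq' hr hc)
    omega
  · omega

lemma hf_eq_zero_iff (hS : IsPreSVT lam N k S) {i : ℕ} (hi : i ∈ Finset.Icc 1 k) :
    hf lam S k T i = 0 ↔ i ∈ Mset lam S T := by
  rw [hf]
  by_cases h : i ∈ Mset lam S T
  · rw [if_neg (by simp [h])]
    simp [h]
  · rw [if_pos ⟨hi, h⟩]
    simp [h]

lemma hf_zero_out {i : ℕ} (hi : i ∉ Finset.Icc 1 k) : hf lam S k T i = 0 := by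
  rw [hf, if_neg (by simp [hi])]

/-- the reconstruction/injectivity lemma -/
lemma inj_core (hY : IsYoung lam) (hS : IsPreSVT lam N k S) (hkN : k ≤ N)
    {T1 T2 : ℕ × ℕ → Finset ℕ} (m1 : T1 ∈ SVTset lam N S) (m2 : T2 ∈ SVTset lam N S)
    (hF : Fsyt lam S T1 = Fsyt lam S T2)
    (hh : ∀ i, hf lam S k T1 i = hf lam S k T2 i) : T1 = T2 := by
  obtain ⟨hT1, hTS1⟩ := m1
  obtain ⟨hT2, hTS2⟩ := m2
  -- the sets of cell maxima agree
  have hM : Mset lam S T1 = Mset lam S T2 := by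
    ext a
    constructor
    · intro ha
      have hik := Mset_subset hS hT1 hTS1 ha
      have h0 : hf lam S k T1 a = 0 := (hf_eq_zero_iff hS hik).mpr ha
      exact (hf_eq_zero_iff hS hik).mp (by rw [← hh a]; exact h0)
    · intro ha
      have hik := Mset_subset hS hT2 hTS2 ha
      have h0 : hf lam S k T2 a = 0 := (hf_eq_zero_iff hS hik).mpr ha
      exact (hf_eq_zero_iff hS hik).mp (by rw [hh a]; exact h0)
  -- the maxima functions agree on empty cells
  have hMF : ∀ p ∈ Ecells lam S, maxv (T1 p) = maxv (T2 p) := by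
    intro p hp
    have e1 := congrFun hF p
    simp only [Fsyt, if_pos hp] at e1
    have a1 : maxv (T1 p) ∈ Mset lam S T1 :=
      Finset.mem_image_of_mem (fun p => maxv (T1 p)) hp
    have a2 : maxv (T2 p) ∈ Mset lam S T1 := by
      rw [hM]
      exact Finset.mem_image_of_mem (fun p => maxv (T2 p)) hp
    refine rnk_injOn a1 a2 ?_
    rw [e1, hM]
  -- each value sits in the same cell in both tableaux
  have key : ∀ i : ℕ, ∀ p q : ℕ × ℕ, i ∈ T1 p → i ∈ T2 q → p = q := by
    intro i p q hp hq
    have hplam : p ∈ lam := svt_mem_lam hT1 hp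
    have hqlam : q ∈ lam := svt_mem_lam hT2 hq
    have hiN : i ∈ Finset.Icc 1 N := svt_subset hT1 hplam hp
    rw [Finset.mem_Icc] at hiN
    rcases le_or_gt i k with hik | hik
    · by_cases hM1 : i ∈ Mset lam S T1
      · obtain ⟨pa, hpaE, hpa⟩ := Finset.mem_image.mp hM1
        obtain ⟨pb, hpbE, hpb⟩ := Finset.mem_image.mp (hM ▸ hM1)
        have hp' : p = pa := svt_uniq hT1 hp (hpa ▸ maxv_mem (svt_nonempty hT1 (Ecells_subset hpaE)))
        have hq' : q = pb := svt_uniq hT2 hq (hpb ▸ maxv_mem (svt_nonempty hT2 (Ecells_subset hpbE)))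
        have : maxv (T1 pb) = maxv (T1 pa) := by
          rw [hMF pb hpbE, hpb, hpa]
        rw [hp', hq']
        exact (Mf_injOn hT1 hpbE hpaE this).symm
      · have hM2 : i ∉ Mset lam S T2 := by rw [← hM]; exact hM1
        have hpD : p ∈ Dset lam S (fun r => maxv (T1 r)) i :=
          cell_mem_Dset hY hS hT1 hTS1 hiN.1 hik hM1 hp
        have hqD2 : q ∈ Dset lam S (fun r => maxv (T2 r)) i :=
          cell_mem_Dset hY hS hT2 hTS2 hiN.1 hik hM2 hq
        have hDeq : Dset lam S (fun r => maxv (T2 r)) i = Dset lam S (fun r => maxv (T1 r)) i :=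
          Dset_congr (fun r hr => (hMF r hr).symm)
        have hqD : q ∈ Dset lam S (fun r => maxv (T1 r)) i := hDeq ▸ hqD2
        have hhi := hh i
        rw [hf, hf, if_pos ⟨Finset.mem_Icc.mpr ⟨hiN.1, hik⟩, hM1⟩,
          if_pos ⟨Finset.mem_Icc.mpr ⟨hiN.1, hik⟩, hM2⟩, cellOf_eq hT1 hp, cellOf_eq hT2 hq,
          hDeq] at hhi
        exact anti_idx_inj
          (fun a ha b hb hr hc => Dset_antichain hY hS hT1 ha hb hr hc) hpD hqD (by omega)
    · obtain ⟨q0, ⟨hq0lam, hq0⟩, -⟩ := hS.exactlyOnce i (Finset.mem_Icc.mpr ⟨by omega, hiN.2⟩)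
      have h1 : p = q0 := svt_uniq hT1 hp (hTS1 q0 hq0)
      have h2 : q = q0 := svt_uniq hT2 hq (hTS2 q0 hq0)
      rw [h1, h2]
  funext p
  ext i
  constructor
  · intro h
    have hplam : p ∈ lam := svt_mem_lam hT1 h
    have hiN : i ∈ Finset.Icc 1 N := svt_subset hT1 hplam h
    obtain ⟨q, ⟨hqlam, hq⟩, -⟩ := hT2.exactlyOnce i hiN
    rwa [key i p q h hq]
  · intro h
    have hplam : p ∈ lam := svt_mem_lam hT2 h
    have hiN : i ∈ Finset.Icc 1 N := svt_subset hT2 hplam h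
    obtain ⟨q, ⟨hqlam, hq⟩, -⟩ := hT1.exactlyOnce i hiN
    rwa [← key i q p hq h]

lemma syt_finite (E : Finset (ℕ × ℕ)) : {F : ℕ × ℕ → ℕ | IsSYT E F}.Finite := by
  classical
  have hsub : {F : ℕ × ℕ → ℕ | IsSYT E F} ⊆
      (fun σ : (∀ p ∈ E, ℕ) => fun p => if h : p ∈ E then σ p h else 0) ''
        ↑(E.pi fun _ => Finset.Icc 1 E.card) := by
    intro F hF
    refine ⟨fun p _ => F p, ?_, ?_⟩
    · rw [Finset.mem_coe, Finset.mem_pi]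
      intro p hp
      exact hF.mem_range p hp
    · funext p
      by_cases h : p ∈ E
      · simp [h]
      · simp [h, hF.support p h]
  exact Set.Finite.subset (((E.pi fun _ => Finset.Icc 1 E.card)).finite_toSet.image _) hsub

def Vfin (k s m : ℕ) : Finset (Fin k → Fin (s + 1)) :=
  Finset.univ.filter (fun v => (Finset.univ.filter (fun j => v j = 0)).card = m)

lemma Vfin_card (k s m : ℕ) : (Vfin k s m).card ≤ k.choose m * s ^ (k - m) := by
  classical
  set pf : Finset (Fin k) → Finset (Fin k → Fin (s + 1)) := fun Z =>
    Fintype.piFinset (fun j => if j ∈ Z then ({0} : Finset (Fin (s + 1)))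
      else Finset.univ.filter (fun x => x ≠ 0)) with hpf
  have hsub : Vfin k s m ⊆ (Finset.univ.powersetCard m).biUnion pf := by
    intro v hv
    rw [Finset.mem_biUnion]
    refine ⟨Finset.univ.filter (fun j => v j = 0), ?_, ?_⟩
    · exact Finset.mem_powersetCard.mpr ⟨Finset.subset_univ _, (Finset.mem_filter.mp hv).2⟩
    · rw [hpf, Fintype.mem_piFinset]
      intro j
      by_cases h : v j = 0 <;> simp [h]
  have hcardeq : ∀ Z ∈ Finset.univ.powersetCard m, (pf Z).card = s ^ (k - m) := by
    intro Z hZ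
    have hZcard : Z.card = m := (Finset.mem_powersetCard.mp hZ).2
    rw [hpf]
    rw [Fintype.card_piFinset]
    have hterm : ∀ j : Fin k,
        ((if j ∈ Z then ({0} : Finset (Fin (s + 1))) else Finset.univ.filter (fun x => x ≠ 0)).card)
        = if j ∈ Z then 1 else s := by
      intro j
      by_cases h : j ∈ Z
      · simp [h]
      · rw [if_neg h, if_neg h]
        rw [Finset.filter_ne' Finset.univ 0, Finset.card_erase_of_mem (Finset.mem_univ _)]
        simp
    calc (∏ j : Fin k, (if j ∈ Z then ({0} : Finset (Fin (s + 1)))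
            else Finset.univ.filter (fun x => x ≠ 0)).card)
        = ∏ j : Fin k, (if j ∈ Z then 1 else s) := Finset.prod_congr rfl (fun j _ => hterm j)
      _ = (∏ j ∈ Z, (if j ∈ Z then 1 else s)) * ∏ j ∈ Zᶜ, (if j ∈ Z then 1 else s) :=
          (Finset.prod_mul_prod_compl Z _).symm
      _ = 1 * s ^ (k - m) := by
          rw [Finset.prod_congr rfl (fun j hj => if_pos hj), Finset.prod_const_one]
          congr 1
          rw [Finset.prod_congr rfl (fun j hj => if_neg (Finset.mem_compl.mp hj)),
            Finset.prod_const, Finset.card_compl, Fintype.card_fin, hZcard]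
      _ = s ^ (k - m) := one_mul _
  calc (Vfin k s m).card ≤ ((Finset.univ.powersetCard m).biUnion pf).card :=
        Finset.card_le_card hsub
    _ ≤ ∑ Z ∈ Finset.univ.powersetCard m, (pf Z).card := Finset.card_biUnion_le
    _ = ∑ _Z ∈ Finset.univ.powersetCard m, s ^ (k - m) := Finset.sum_congr rfl hcardeq
    _ = (Finset.univ.powersetCard m).card * s ^ (k - m) := Finset.sum_const _
    _ = k.choose m * s ^ (k - m) := by
        rw [Finset.card_powersetCard, Finset.card_univ, Fintype.card_fin]

end SVTproof

open SVTproof in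
/-- For nonempty `λ`, `N ≥ |λ|`, `0 ≤ k < N` and an
`N⟨k⟩`-standard set-valued pre-tableau `S`,
`f^{λ,N,S} ≤ f^{λ∖S} · C(k, |λ∖S|) · sv((λ∖S)⁺)^{k−|λ∖S|}`, where
`(λ∖S)⁺ = (λ∖S) ∪ NW({(r,c) ∈ λ : S(r,c) ≠ ∅})`. -/
theorem fSVT_pre_upper_bound (lam : Finset (ℕ × ℕ)) (hY : IsYoung lam)
    (hne : lam.Nonempty) (N k : ℕ) (hN : lam.card ≤ N) (hk : k < N)
    (S : ℕ × ℕ → Finset ℕ) (hS : IsPreSVT lam N k S) :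
    fSVT lam N S ≤
      fSYT (lam.filter (fun p => S p = ∅)) *
        Nat.choose k (lam.filter (fun p => S p = ∅)).card *
        (sv ((lam.filter (fun p => S p = ∅)) ∪
          NW (lam.filter (fun p => S p ≠ ∅)))) ^
            (k - (lam.filter (fun p => S p = ∅)).card) := by
  classical
  have hkN : k ≤ N := le_of_lt hk
  show fSVT lam N S ≤
    fSYT (Ecells lam S) * Nat.choose k (Ecells lam S).card *
      (sv (Fpl lam S)) ^ (k - (Ecells lam S).card)
  set s := sv (Fpl lam S) with hs
  set m := (Ecells lam S).card with hm
  set Φ : (ℕ × ℕ → Finset ℕ) → ((ℕ × ℕ → ℕ) × (Fin k → Fin (s + 1))) := fun T =>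
    (Fsyt lam S T, fun j =>
      (⟨min (hf lam S k T (j.1 + 1)) s, Nat.lt_succ_of_le (min_le_right _ _)⟩ : Fin (s + 1)))
    with hΦ
  set B : Set ((ℕ × ℕ → ℕ) × (Fin k → Fin (s + 1))) :=
    {F : ℕ × ℕ → ℕ | IsSYT (Ecells lam S) F} ×ˢ (↑(Vfin k s m) : Set (Fin k → Fin (s + 1)))
    with hB
  have hmaps : ∀ T ∈ SVTset lam N S, Φ T ∈ B := by
    rintro T ⟨hT, hTS⟩
    refine Set.mem_prod.mpr ⟨Fsyt_isSYT hT, ?_⟩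
    simp only [Finset.mem_coe, Vfin, Finset.mem_filter]
    refine ⟨Finset.mem_univ _, ?_⟩
    have hle : ∀ i, hf lam S k T i ≤ s := fun i => hf_le hY hS hT hTS hkN i
    have hzero : ∀ j : Fin k,
        ((Φ T).2 j = 0 ↔ (j.1 + 1) ∈ Mset lam S T) := by
      intro j
      rw [hΦ]
      simp only [Fin.ext_iff, Fin.val_zero]
      rw [min_eq_left (hle _)]
      exact hf_eq_zero_iff hS (Finset.mem_Icc.mpr ⟨by omega, by omega⟩)
    have hcard : (Finset.univ.filter (fun j : Fin k => (Φ T).2 j = 0)).card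
        = (Mset lam S T).card := by
      apply Finset.card_bij (fun j _ => (j.1 + 1))
      · intro j hj
        exact (hzero j).mp (Finset.mem_filter.mp hj).2
      · intro a ha b hb hab
        exact Fin.ext (by omega)
      · intro a ha
        have hik := Finset.mem_Icc.mp (Mset_subset hS hT hTS ha)
        refine ⟨⟨a - 1, by omega⟩, ?_, by simp only [Fin.val_mk]; omega⟩
        refine Finset.mem_filter.mpr ⟨Finset.mem_univ _, ?_⟩
        rw [hzero]
        simpa only [show a - 1 + 1 = a by omega] using ha
    show (Finset.univ.filter (fun j : Fin k => (Φ T).2 j = 0)).card = m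
    rw [hcard, Mset_card hT]
  have hinj : Set.InjOn Φ (SVTset lam N S) := by
    intro T1 h1 T2 h2 heq
    have hF : Fsyt lam S T1 = Fsyt lam S T2 := congrArg Prod.fst heq
    obtain ⟨hT1', hTS1'⟩ := h1
    obtain ⟨hT2', hTS2'⟩ := h2
    have hh : ∀ i, hf lam S k T1 i = hf lam S k T2 i := by
      intro i
      by_cases hi : i ∈ Finset.Icc 1 k
      · have hi' := Finset.mem_Icc.mp hi
        have hvj := congrFun (congrArg Prod.snd heq) ⟨i - 1, by omega⟩
        have hval := congrArg Fin.val hvj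
        simp only [hΦ] at hval
        rw [show i - 1 + 1 = i by omega] at hval
        rwa [min_eq_left (hf_le hY hS hT1' hTS1' hkN i),
          min_eq_left (hf_le hY hS hT2' hTS2' hkN i)] at hval
      · rw [hf_zero_out hi, hf_zero_out hi]
    exact inj_core hY hS hkN ⟨hT1', hTS1'⟩ ⟨hT2', hTS2'⟩ hF hh
  have hBfin : B.Finite := (syt_finite _).prod (Vfin k s m).finite_toSet
  have step1 : fSVT lam N S ≤ B.ncard :=
    Set.ncard_le_ncard_of_injOn Φ hmaps hinj hBfin
  have step2 : B.ncard = fSYT (Ecells lam S) * (Vfin k s m).card := by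
    have hprod : B.ncard = ({F : ℕ × ℕ → ℕ | IsSYT (Ecells lam S) F}).ncard *
        ((↑(Vfin k s m) : Set (Fin k → Fin (s + 1)))).ncard := by
      rw [hB, ← Nat.card_coe_set_eq, ← Nat.card_coe_set_eq,
        ← Nat.card_coe_set_eq, ← Nat.card_prod]
      exact Nat.card_congr (Equiv.Set.prod _ _)
    rw [hprod, Set.ncard_coe_finset]
    rfl
  have step3 : (Vfin k s m).card ≤ k.choose m * s ^ (k - m) := Vfin_card k s m
  calc fSVT lam N S ≤ B.ncard := step1
    _ = fSYT (Ecells lam S) * (Vfin k s m).card := step2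
    _ ≤ fSYT (Ecells lam S) * (k.choose m * s ^ (k - m)) := Nat.mul_le_mul_left _ step3
    _ = fSYT (Ecells lam S) * Nat.choose k m * s ^ (k - m) := by rw [mul_assoc]
end

section
/- Let λ be a nonempty Young diagram, N ≥ |λ|, 0 ≤ k ≤ N, and let S be an N⟨k⟩-standard set-valued pre-tableau of shape λ. Then sv((λ∖S)⁺)^{k−|λ∖S|} ≤ f^{λ,N,S}, where λ∖S = {(r,c) ∈ λ : S(r,c) = ∅} and (λ∖S)⁺ = (λ∖S) ∪ NW({(r,c) ∈ λ : S(r,c) ≠ ∅}). (Note |λ∖S| ≤ k, so the exponent is a nonnegative integer.) -/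
open Finset

/-! Write the values `1, …, k` into the cells `c 0, …, c (k-1)` of a sequence whose antidiagonal
index `r + c` weakly increases, which visits every empty cell of `S` and otherwise only cells of
`(λ∖S)⁺`. Adjacent cells differ by one in antidiagonal index, so these small values increase along
rows and columns; they lie below the values of `S`; and none lands just south or east of a
nonempty cell, since an empty cell never follows a nonempty one and a cell of
`NW({S ≠ ∅})` has no other nonempty cell north-west of it. With `s = sv((λ∖S)⁺)`, each of the
`m = k - |λ∖S|` spare values may go to any of the `s` cells of the outer antidiagonal
`r + c = s + 1` of `δ^s ⊆ (λ∖S)⁺`, giving `s ^ m` distinct tableaux. -/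

def place {k : ℕ} (S : ℕ × ℕ → Finset ℕ) (c : Fin k → ℕ × ℕ) (p : ℕ × ℕ) : Finset ℕ :=
  S p ∪ (Finset.univ.filter fun i => c i = p).image fun i : Fin k => (i : ℕ) + 1

structure IsPlacement {k : ℕ} (μ : Finset (ℕ × ℕ)) (S : ℕ × ℕ → Finset ℕ)
    (c : Fin k → ℕ × ℕ) : Prop where
  monotone_antidiag : Monotone fun i => (c i).1 + (c i).2
  mem : ∀ i, c i ∈ μ.filter (fun p => S p = ∅) ∪ NW (μ.filter fun p => S p ≠ ∅)
  surj : ∀ p ∈ μ, S p = ∅ → ∃ i, c i = p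

section Placement

variable {μ : Finset (ℕ × ℕ)} {N k : ℕ} {S : ℕ × ℕ → Finset ℕ} {c : Fin k → ℕ × ℕ}

lemma mem_place {p : ℕ × ℕ} {x : ℕ} :
    x ∈ place S c p ↔ x ∈ S p ∨ ∃ i, c i = p ∧ (i : ℕ) + 1 = x := by
  simp [place]

lemma IsPreSVT.mem_Ioc (hS : IsPreSVT μ N k S) {p : ℕ × ℕ} {x : ℕ} (hx : x ∈ S p) :
    x ∈ Finset.Ioc k N := by
  by_cases hp : p ∈ μ
  · have := Finset.mem_Icc.1 (hS.subset p hp hx)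
    exact Finset.mem_Ioc.2 ⟨by omega, this.2⟩
  · simp [hS.support p hp] at hx

lemma IsPlacement.mem_mu (hc : IsPlacement μ S c) (i : Fin k) : c i ∈ μ := by
  rcases Finset.mem_union.1 (hc.mem i) with h | h
  · exact (Finset.mem_filter.1 h).1
  · exact (Finset.mem_filter.1 (Finset.mem_filter.1 h).1).1

lemma IsPlacement.place_nonempty (hc : IsPlacement μ S c) {p : ℕ × ℕ} (hp : p ∈ μ) :
    (place S c p).Nonempty := by
  by_cases h : S p = ∅
  · obtain ⟨i, hi⟩ := hc.surj p hp h
    exact ⟨i + 1, mem_place.2 (Or.inr ⟨i, hi, rfl⟩)⟩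
  · obtain ⟨x, hx⟩ := Finset.nonempty_iff_ne_empty.2 h
    exact ⟨x, mem_place.2 (Or.inl hx)⟩

lemma IsPlacement.place_lt (hS : IsPreSVT μ N k S) (hc : IsPlacement μ S c) {p q : ℕ × ℕ}
    (hp : p ∈ μ) (h₁ : p.1 ≤ q.1) (h₂ : p.2 ≤ q.2) (hpq : p ≠ q)
    (hne : (S p).Nonempty → (S q).Nonempty) (hlt : ∀ a ∈ S p, ∀ b ∈ S q, a < b) :
    ∀ a ∈ place S c p, ∀ b ∈ place S c q, a < b := by
  intro a ha b hb
  have hdiag : p.1 + p.2 < q.1 + q.2 := by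
    have : p.1 ≠ q.1 ∨ p.2 ≠ q.2 := by
      contrapose! hpq
      exact Prod.ext hpq.1 hpq.2
    omega
  rcases mem_place.1 ha with ha | ⟨i, rfl, rfl⟩ <;> rcases mem_place.1 hb with hb | ⟨j, rfl, rfl⟩
  · exact hlt a ha b hb
  · exfalso
    rcases Finset.mem_union.1 (hc.mem j) with hE | hNW
    · obtain ⟨x, hx⟩ := hne ⟨a, ha⟩
      simp [(Finset.mem_filter.1 hE).2] at hx
    · exact hpq ((Finset.mem_filter.1 hNW).2 p
        (Finset.mem_filter.2 ⟨hp, Finset.ne_empty_of_mem ha⟩) h₁ h₂)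
  · have := Finset.mem_Ioc.1 (hS.mem_Ioc hb)
    have := i.isLt
    omega
  · have : i < j := lt_of_not_ge fun hji => (hc.monotone_antidiag hji).not_gt hdiag
    omega

lemma IsPlacement.existsUnique_mem_place (hS : IsPreSVT μ N k S) (hc : IsPlacement μ S c)
    {x : ℕ} (hx : x ∈ Finset.Icc 1 N) : ∃! p, p ∈ μ ∧ x ∈ place S c p := by
  rw [Finset.mem_Icc] at hx
  by_cases hxk : x ≤ k
  · refine ⟨c ⟨x - 1, by omega⟩,
      ⟨hc.mem_mu _, mem_place.2 (Or.inr ⟨_, rfl, by simp only; omega⟩)⟩, ?_⟩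
    rintro q ⟨-, hq⟩
    rcases mem_place.1 hq with hq | ⟨i, rfl, rfl⟩
    · have := Finset.mem_Ioc.1 (hS.mem_Ioc hq)
      omega
    · simp
  · obtain ⟨p, hp, huniq⟩ := hS.exactlyOnce x (Finset.mem_Icc.2 ⟨by omega, hx.2⟩)
    refine ⟨p, ⟨hp.1, mem_place.2 (Or.inl hp.2)⟩, ?_⟩
    rintro q ⟨hq, hxq⟩
    rcases mem_place.1 hxq with hxq | ⟨i, rfl, rfl⟩
    · exact huniq q ⟨hq, hxq⟩
    · exact absurd i.isLt (by omega)

theorem IsPlacement.isSVT_place (hS : IsPreSVT μ N k S) (hk : k ≤ N)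
    (hc : IsPlacement μ S c) : IsSVT μ N (place S c) where
  support p hp := by
    ext x
    simp only [mem_place, hS.support p hp, Finset.notMem_empty, false_or, iff_false]
    rintro ⟨i, rfl, -⟩
    exact hp (hc.mem_mu i)
  subset p _ x hx := by
    rcases mem_place.1 hx with hx | ⟨i, -, rfl⟩
    · have := Finset.mem_Ioc.1 (hS.mem_Ioc hx)
      exact Finset.mem_Icc.2 ⟨by omega, this.2⟩
    · have := i.isLt
      exact Finset.mem_Icc.2 ⟨by omega, by omega⟩
  exactlyOnce _ hx := hc.existsUnique_mem_place hS hx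
  down_ne _ _ _ h _ := hc.place_nonempty h
  right_ne _ _ _ h _ := hc.place_nonempty h
  down_lt r c' h h' := hc.place_lt hS h (Nat.le_succ r) le_rfl (by simp)
    (hS.down_ne r c' h h') (hS.down_lt r c' h h')
  right_lt r c' h h' := hc.place_lt hS h le_rfl (Nat.le_succ c') (by simp)
    (hS.right_ne r c' h h') (hS.right_lt r c' h h')
  empties := (Finset.card_eq_zero.2 (Finset.filter_eq_empty_iff.2 fun _ hp =>
    (hc.place_nonempty hp).ne_empty)).le

lemma place_injective (hS : ∀ p, ∀ x ∈ S p, k < x) :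
    Function.Injective (place S : (Fin k → ℕ × ℕ) → ℕ × ℕ → Finset ℕ) := by
  intro c c' h
  funext i
  have hi : (i : ℕ) + 1 ∈ place S c' (c i) := by
    rw [← h]
    exact mem_place.2 (Or.inr ⟨i, rfl, rfl⟩)
  rcases mem_place.1 hi with hi | ⟨j, hj, hji⟩
  · exact absurd (hS _ _ hi) (by omega)
  · obtain rfl : j = i := Fin.ext (by omega)
    exact hj.symm

lemma finite_setOf_isPreSVT (μ : Finset (ℕ × ℕ)) (N k : ℕ) :
    {T | IsPreSVT μ N k T}.Finite := by
  refine (Set.finite_range fun f : μ → (Finset.Icc 1 N).powerset =>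
    fun p => if h : p ∈ μ then (f ⟨p, h⟩ : Finset ℕ) else ∅).subset ?_
  intro T hT
  refine ⟨fun p => ⟨T p, Finset.mem_powerset.2 ((hT.subset p p.2).trans
    (Finset.Icc_subset_Icc_left (Nat.le_add_left 1 k)))⟩, funext fun p => ?_⟩
  by_cases hp : p ∈ μ
  · simp [hp]
  · simp [hp, hT.support p hp]

theorem card_le_fSVT {ι : Type*} [Fintype ι] (hS : IsPreSVT μ N k S) (hk : k ≤ N)
    (c : ι → Fin k → ℕ × ℕ) (hinj : Function.Injective c) (hc : ∀ g, IsPlacement μ S (c g)) :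
    Fintype.card ι ≤ fSVT μ N S := by
  rw [← Nat.card_eq_fintype_card, ← Set.ncard_univ]
  refine Set.ncard_le_ncard_of_injOn (fun g => place S (c g))
    (fun g _ => ⟨(hc g).isSVT_place hS hk, fun p => Finset.subset_union_left⟩)
    ((place_injective fun p x hx => (Finset.mem_Ioc.1 (hS.mem_Ioc hx)).1).comp hinj).injOn
    ((finite_setOf_isPreSVT μ N 0).subset fun T hT => hT.1)

end Placement

lemma exists_equiv_fin_monotone {X α : Type*} [Fintype X] [LinearOrder α] (f : X → α) {n : ℕ}
    (hn : Fintype.card X = n) : ∃ σ : Fin n ≃ X, Monotone (f ∘ σ) :=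
  let e := (Fintype.equivFinOfCardEq hn).symm
  ⟨(Tuple.sort (f ∘ e)).trans e, Tuple.monotone_sort (f ∘ e)⟩

lemma staircase_sv_subset (μ : Finset (ℕ × ℕ)) : staircase (sv μ) ⊆ μ :=
  Nat.findGreatest_spec (P := fun k => staircase k ⊆ μ) (Nat.zero_le _) (by simp [staircase])

def antidiagCell (s : ℕ) (j : Fin s) : ℕ × ℕ := ((j : ℕ) + 1, s - j)

lemma antidiagCell_mem_staircase {s : ℕ} (j : Fin s) : antidiagCell s j ∈ staircase s := by
  have := j.isLt
  simp only [antidiagCell, staircase, Finset.mem_filter, Finset.mem_product, Finset.mem_Icc]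
  omega

lemma antidiagCell_antidiag {s : ℕ} (j : Fin s) :
    (antidiagCell s j).1 + (antidiagCell s j).2 = s + 1 := by
  have := j.isLt
  simp only [antidiagCell]
  omega

lemma antidiagCell_injective {s : ℕ} : Function.Injective (antidiagCell s) :=
  fun i j h => Fin.ext (by simpa [antidiagCell] using congrArg Prod.fst h)

theorem exists_injective_placements {μ : Finset (ℕ × ℕ)} {S : ℕ × ℕ → Finset ℕ} {s m k : ℕ}
    (hstair : staircase s ⊆ μ.filter (fun p => S p = ∅) ∪ NW (μ.filter fun p => S p ≠ ∅))
    (hk : (μ.filter fun p => S p = ∅).card + m = k) :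
    ∃ c : (Fin m → Fin s) → Fin k → ℕ × ℕ,
      Function.Injective c ∧ ∀ g, IsPlacement μ S (c g) := by
  set E := μ.filter fun p => S p = ∅
  -- one token per empty cell, and `m` spare tokens for the outer antidiagonal of `δ^s`
  let antidiag : E ⊕ Fin m → ℕ := Sum.elim (fun p => p.1.1 + p.1.2) fun _ => s + 1
  let cell (g : Fin m → Fin s) : E ⊕ Fin m → ℕ × ℕ := Sum.elim Subtype.val (antidiagCell s ∘ g)
  have hcell (g : Fin m → Fin s) (x : E ⊕ Fin m) : (cell g x).1 + (cell g x).2 = antidiag x := by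
    cases x <;> simp [cell, antidiag, antidiagCell_antidiag]
  obtain ⟨σ, hσ⟩ := exists_equiv_fin_monotone antidiag
    (by simpa using hk : Fintype.card (E ⊕ Fin m) = k)
  refine ⟨fun g => cell g ∘ σ, fun g g' h => funext fun j => antidiagCell_injective ?_,
    fun g => ⟨?_, fun i => ?_, fun p hp hSp => ?_⟩⟩
  · simpa [cell] using congrFun h (σ.symm (Sum.inr j))
  · intro i j hij
    show (cell g (σ i)).1 + (cell g (σ i)).2 ≤ (cell g (σ j)).1 + (cell g (σ j)).2
    rw [hcell, hcell]
    exact hσ hij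
  · show cell g (σ i) ∈ _
    rcases σ i with e | j
    · exact Finset.mem_union_left _ e.2
    · exact hstair (antidiagCell_mem_staircase (g j))
  · exact ⟨σ.symm (Sum.inl ⟨p, Finset.mem_filter.2 ⟨hp, hSp⟩⟩), by simp [cell]⟩

theorem fSVT_sv_lower_bound_general (lam : Finset (ℕ × ℕ)) (N k : ℕ) (hk : k ≤ N)
    (S : ℕ × ℕ → Finset ℕ) (hS : IsPreSVT lam N k S) :
    (sv ((lam.filter (fun p => S p = ∅)) ∪
        NW (lam.filter (fun p => S p ≠ ∅)))) ^
          (k - (lam.filter (fun p => S p = ∅)).card)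
      ≤ fSVT lam N S := by
  obtain ⟨c, hinj, hc⟩ :=
    exists_injective_placements (staircase_sv_subset _) (Nat.add_sub_of_le hS.empties)
  simpa using card_le_fSVT hS hk c hinj hc

/-- For nonempty `λ`, `N ≥ |λ|`, `0 ≤ k ≤ N` and an
`N⟨k⟩`-standard set-valued pre-tableau `S`,
`sv((λ∖S)⁺)^{k−|λ∖S|} ≤ f^{λ,N,S}`, where
`(λ∖S)⁺ = (λ∖S) ∪ NW({(r,c) ∈ λ : S(r,c) ≠ ∅})`. -/
theorem fSVT_sv_lower_bound (lam : Finset (ℕ × ℕ)) (hY : IsYoung lam)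
    (hne : lam.Nonempty) (N k : ℕ) (hN : lam.card ≤ N) (hk : k ≤ N)
    (S : ℕ × ℕ → Finset ℕ) (hS : IsPreSVT lam N k S) :
    (sv ((lam.filter (fun p => S p = ∅)) ∪
        NW (lam.filter (fun p => S p ≠ ∅)))) ^
          (k - (lam.filter (fun p => S p = ∅)).card)
      ≤ fSVT lam N S :=
  fSVT_sv_lower_bound_general lam N k hk S hS
end

section
/- Let λ be a Young diagram, N ≥ |λ|, let T be an N-standard set-valued tableau of shape λ, and let 0 ≤ k ≤ N. Define T^⟨k⟩ by T^⟨k⟩(r,c) = T(r,c) ∩ {k+1,...,N} for each cell (r,c) ∈ λ. Then T^⟨k⟩ is an N⟨k⟩-standard set-valued pre-tableau of shape λ, and T^⟨k⟩(r,c) ⊆ T(r,c) for every cell; moreover T^⟨k⟩ is the unique N⟨k⟩-standard set-valued pre-tableau S of shape λ with S(r,c) ⊆ T(r,c) for every cell. -/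
open Finset

/-- For an `N`-standard set-valued tableau `T` of shape `λ` and
`0 ≤ k ≤ N`, the restriction `T^⟨k⟩(r,c) = T(r,c) ∩ {k+1,…,N}` is the unique
`N⟨k⟩`-standard set-valued pre-tableau contained in `T`. -/
theorem restriction_unique_pretableau (lam : Finset (ℕ × ℕ)) (hY : IsYoung lam)
    (N k : ℕ) (hN : lam.card ≤ N) (hk : k ≤ N)
    (T : ℕ × ℕ → Finset ℕ) (hT : IsSVT lam N T) :
    IsPreSVT lam N k (fun p => T p ∩ Finset.Icc (k + 1) N) ∧
    (∀ p, T p ∩ Finset.Icc (k + 1) N ⊆ T p) ∧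
    (∀ S : ℕ × ℕ → Finset ℕ, IsPreSVT lam N k S → (∀ p, S p ⊆ T p) →
      S = fun p => T p ∩ Finset.Icc (k + 1) N) := by
  have hTsub : ∀ p ∈ lam, T p ⊆ Finset.Icc 1 N := by
    have := hT.subset; simpa using this
  have hTu : ∀ i ∈ Finset.Icc 1 N, ∃! p, p ∈ lam ∧ i ∈ T p := by
    have := hT.exactlyOnce; simpa using this
  have hTne : ∀ p ∈ lam, (T p).Nonempty := by
    intro p hp
    rw [Finset.nonempty_iff_ne_empty]
    intro h
    have h1 : p ∈ lam.filter (fun p => T p = ∅) := Finset.mem_filter.mpr ⟨hp, h⟩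
    have h2 := Finset.card_pos.mpr ⟨p, h1⟩
    have h3 := hT.empties
    omega
  refine ⟨?_, fun p => Finset.inter_subset_left, ?_⟩
  · constructor
    · intro p hp
      simp [hT.support p hp]
    · intro p _
      exact Finset.inter_subset_right
    · intro i hi
      have hi1 : i ∈ Finset.Icc 1 N := by
        simp only [Finset.mem_Icc] at hi ⊢; omega
      obtain ⟨p, ⟨hp, hip⟩, hu⟩ := hTu i hi1
      refine ⟨p, ⟨hp, Finset.mem_inter.mpr ⟨hip, hi⟩⟩, ?_⟩
      rintro q ⟨hq, hiq⟩
      exact hu q ⟨hq, (Finset.mem_inter.mp hiq).1⟩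
    · rintro r c h1 h2 ⟨a, ha⟩
      obtain ⟨haT, hak⟩ := Finset.mem_inter.mp ha
      obtain ⟨b, hb⟩ := hTne _ h2
      refine ⟨b, Finset.mem_inter.mpr ⟨hb, ?_⟩⟩
      have hab : a < b := hT.down_lt r c h1 h2 a haT b hb
      have hbN := Finset.mem_Icc.mp (hTsub _ h2 hb)
      have := Finset.mem_Icc.mp hak
      simp only [Finset.mem_Icc]; omega
    · rintro r c h1 h2 ⟨a, ha⟩
      obtain ⟨haT, hak⟩ := Finset.mem_inter.mp ha
      obtain ⟨b, hb⟩ := hTne _ h2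
      refine ⟨b, Finset.mem_inter.mpr ⟨hb, ?_⟩⟩
      have hab : a < b := hT.right_lt r c h1 h2 a haT b hb
      have hbN := Finset.mem_Icc.mp (hTsub _ h2 hb)
      have := Finset.mem_Icc.mp hak
      simp only [Finset.mem_Icc]; omega
    · intro r c h1 h2 a ha b hb
      exact hT.down_lt r c h1 h2 a (Finset.mem_inter.mp ha).1 b (Finset.mem_inter.mp hb).1
    · intro r c h1 h2 a ha b hb
      exact hT.right_lt r c h1 h2 a (Finset.mem_inter.mp ha).1 b (Finset.mem_inter.mp hb).1
    · calc (lam.filter (fun p => T p ∩ Finset.Icc (k + 1) N = ∅)).card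
          ≤ (Finset.Icc 1 k).card := by
            apply Finset.card_le_card_of_injOn
              (fun p => if h : (T p).Nonempty then (T p).max' h else 0)
            · intro p hp
              obtain ⟨hpl, hpe⟩ := Finset.mem_filter.mp hp
              have hne := hTne p hpl
              simp only [dif_pos hne]
              have hm : (T p).max' hne ∈ T p := Finset.max'_mem _ _
              have h1 := Finset.mem_Icc.mp (hTsub p hpl hm)
              have h2 : (T p).max' hne ≤ k := by
                by_contra hc
                have : (T p).max' hne ∈ T p ∩ Finset.Icc (k + 1) N := by
                  simp only [Finset.mem_inter, Finset.mem_Icc]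
                  exact ⟨hm, by omega, h1.2⟩
                rw [hpe] at this
                exact absurd this (Finset.notMem_empty _)
              simp only [Finset.mem_coe, Finset.mem_Icc]; omega
            · intro p hp q hq hpq
              obtain ⟨hpl, _⟩ := Finset.mem_filter.mp hp
              obtain ⟨hql, _⟩ := Finset.mem_filter.mp hq
              have hnp := hTne p hpl
              have hnq := hTne q hql
              simp only [dif_pos hnp, dif_pos hnq] at hpq
              set m := (T p).max' hnp with hm
              have hmp : m ∈ T p := Finset.max'_mem _ _
              have hmq : m ∈ T q := hpq ▸ Finset.max'_mem _ _
              obtain ⟨w, _, hu⟩ := hTu m (hTsub p hpl hmp)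
              exact (hu p ⟨hpl, hmp⟩).trans (hu q ⟨hql, hmq⟩).symm
      _ = k := by simp
  · intro S hS hsub
    funext p
    by_cases hp : p ∈ lam
    · apply Finset.Subset.antisymm
      · intro i hi
        exact Finset.mem_inter.mpr ⟨hsub p hi, hS.subset p hp hi⟩
      · intro i hi
        obtain ⟨hiT, hik⟩ := Finset.mem_inter.mp hi
        obtain ⟨q, ⟨hq, hiq⟩, _⟩ := hS.exactlyOnce i hik
        have hi1 : i ∈ Finset.Icc 1 N := by
          simp only [Finset.mem_Icc] at hik ⊢; omega
        obtain ⟨w, _, hwu⟩ := hTu i hi1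
        have h1 : q = w := hwu q ⟨hq, hsub q hiq⟩
        have h2 : p = w := hwu p ⟨hp, hiT⟩
        rwa [h1.trans h2.symm] at hiq
    · simp [hS.support p hp, hT.support p hp]
end
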